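/- arXiv:1801.08713 — 6 statements merged into one kernel-verified Lean document; each statement's English description precedes it below -/
import Mathlib

section
/- Suppose A ∈ ℝ^{n×n} and H(A) = (A + Aᵀ)/2 is negative semidefinite. Then rank H(A) ≤ rank A. -/
open Matrix
open scoped ComplexOrder

namespace Matrix

variable {m n : Type*} [Fintype n]

theorem rank_le_rank_of_ker_mulVecLin_le {K : Type*} [Field K] {A B : Matrix m n K}
    (h : LinearMap.ker A.mulVecLin ≤ LinearMap.ker B.mulVecLin) : B.rank ≤ A.rank := by
  have hker := Submodule.finrank_mono h
  have hA := LinearMap.finrank_range_add_finrank_ker A.mulVecLin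
  have hB := LinearMap.finrank_range_add_finrank_ker B.mulVecLin
  rw [rank, rank]
  omega

variable {𝕜 : Type*} [RCLike 𝕜] {A : Matrix n n 𝕜}

/-- If `A x = 0` then also `x⋆ Aᴴ x = (A x)⋆ x = 0`, so `x` is isotropic for the semidefinite
form `A + Aᴴ` and hence lies in its kernel. -/
theorem ker_mulVecLin_le_ker_add_conjTranspose (hA : (A + Aᴴ).PosSemidef) :
    LinearMap.ker A.mulVecLin ≤ LinearMap.ker (A + Aᴴ).mulVecLin := by
  intro x hx
  replace hx : A *ᵥ x = 0 := hx
  have hquad : star x ⬝ᵥ (A + Aᴴ) *ᵥ x = 0 := by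
    rw [add_mulVec, dotProduct_add, dotProduct_mulVec (star x) Aᴴ, vecMul_conjTranspose,
      star_star, hx, star_zero, dotProduct_zero, zero_dotProduct, add_zero]
  exact (hA.dotProduct_mulVec_zero_iff x).mp hquad

theorem rank_add_conjTranspose_le (hA : (A + Aᴴ).PosSemidef) : (A + Aᴴ).rank ≤ A.rank :=
  rank_le_rank_of_ker_mulVecLin_le (ker_mulVecLin_le_ker_add_conjTranspose hA)

end Matrix

theorem stmt3 (n : ℕ) (A : Matrix (Fin n) (Fin n) ℝ)
    (H : Matrix (Fin n) (Fin n) ℝ) (hH : H = (1/2 : ℝ) • (A + Aᵀ))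
    (hnsd : ∀ y : Fin n → ℝ, y ⬝ᵥ (H *ᵥ y) ≤ 0) :
    H.rank ≤ A.rank := by
  have hneg : -A + (-A)ᴴ = (-2 : ℝ) • H := by
    rw [hH, conjTranspose_eq_transpose_of_trivial, smul_smul, transpose_neg]
    norm_num [add_comm]
  have hpsd : (-A + (-A)ᴴ).PosSemidef := by
    rw [posSemidef_iff_dotProduct_mulVec]
    refine ⟨?_, fun x ↦ ?_⟩
    · rw [IsHermitian, conjTranspose_add, conjTranspose_conjTranspose, add_comm]
    · rw [hneg, smul_mulVec, dotProduct_smul, star_trivial, smul_eq_mul]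
      nlinarith [hnsd x]
  calc H.rank = ((-2 : ℝ) • H).rank := (rank_smul_of_mem_nonZeroDivisors H (by simp)).symm
    _ = (-A + (-A)ᴴ).rank := by rw [hneg]
    _ ≤ (-A).rank := rank_add_conjTranspose_le hpsd
    _ = A.rank := by
      rw [← neg_one_smul ℝ A]
      exact rank_smul_of_mem_nonZeroDivisors A (by simp)
end

section
/- Suppose A ∈ ℝ^{n×n}, H(A) = (A + Aᵀ)/2 is negative semidefinite, and rank H(A) = rank A. Then A and H(A) have the same null space. -/
/-!
Since `xᵀ A x = xᵀ H(A) x`, a vector with `A x = 0` is an isotropic vector of the semidefinite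
matrix `H(A)`, hence lies in its kernel. So `ker A ⊆ ker H(A)`, and equality of ranks forces the
two kernels to have the same dimension, hence to coincide.
-/

open Matrix

namespace Matrix

variable {m n o K : Type*}

theorem dotProduct_symmPart_mulVec_self [Fintype n] [Field K] [CharZero K]
    (A : Matrix n n K) (x : n → K) :
    x ⬝ᵥ (((1 / 2 : K) • (A + Aᵀ)) *ᵥ x) = x ⬝ᵥ (A *ᵥ x) := by
  rw [smul_mulVec, add_mulVec, dotProduct_smul, dotProduct_add, dotProduct_transpose_mulVec,
    smul_eq_mul]
  ring

theorem mulVec_eq_zero_of_dotProduct_mulVec_eq_zero [Fintype n] {S : Matrix n n ℝ}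
    (hS : Sᵀ = S) (hnonpos : ∀ y : n → ℝ, y ⬝ᵥ (S *ᵥ y) ≤ 0) {x : n → ℝ}
    (hx : x ⬝ᵥ (S *ᵥ x) = 0) : S *ᵥ x = 0 := by
  have hneg : (-S).PosSemidef := by
    refine PosSemidef.of_dotProduct_mulVec_nonneg ?_ fun y => ?_
    · rw [IsHermitian, conjTranspose_eq_transpose_of_trivial, transpose_neg, hS]
    · simpa only [neg_mulVec, dotProduct_neg, star_trivial, neg_nonneg] using hnonpos y
  have := (hneg.dotProduct_mulVec_zero_iff x).mp (by simp [neg_mulVec, hx])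
  rwa [neg_mulVec, neg_eq_zero] at this

theorem ker_mulVecLin_eq_of_le_of_rank_eq [Fintype n] [Field K] {A : Matrix m n K}
    {B : Matrix o n K} (hle : LinearMap.ker A.mulVecLin ≤ LinearMap.ker B.mulVecLin)
    (hrank : A.rank = B.rank) : LinearMap.ker A.mulVecLin = LinearMap.ker B.mulVecLin := by
  refine Submodule.eq_of_le_of_finrank_eq hle ?_
  have hA := LinearMap.finrank_range_add_finrank_ker A.mulVecLin
  have hB := LinearMap.finrank_range_add_finrank_ker B.mulVecLin
  rw [← rank] at hA hB
  omega

end Matrix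

theorem stmt4 (n : ℕ) (A : Matrix (Fin n) (Fin n) ℝ)
    (H : Matrix (Fin n) (Fin n) ℝ) (hH : H = (1/2 : ℝ) • (A + Aᵀ))
    (hnsd : ∀ y : Fin n → ℝ, y ⬝ᵥ (H *ᵥ y) ≤ 0)
    (hrank : H.rank = A.rank) :
    ∀ x : Fin n → ℝ, A *ᵥ x = 0 ↔ H *ᵥ x = 0 := by
  have hsymm : Hᵀ = H := by
    rw [hH, transpose_smul, transpose_add, transpose_transpose, add_comm]
  have hle : LinearMap.ker A.mulVecLin ≤ LinearMap.ker H.mulVecLin := by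
    intro x hx
    rw [LinearMap.mem_ker, mulVecLin_apply] at hx ⊢
    refine mulVec_eq_zero_of_dotProduct_mulVec_eq_zero hsymm hnsd ?_
    rw [hH, dotProduct_symmPart_mulVec_self, hx, dotProduct_zero]
  have hker := ker_mulVecLin_eq_of_le_of_rank_eq hle hrank.symm
  intro x
  simpa using SetLike.ext_iff.mp hker x
end

section
/- Let A ∈ ℝ^{n×n} be eventually positive. If v₁ > 0 is any eigenvector of A with strictly positive entries, and v_r > 0 is a right eigenvector for the eigenvalue ρ(A) (the spectral radius) with positive entries, then v₁ is a scalar multiple of v_r. -/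
/-!
Some power `B = A ^ k₀` is entrywise positive and has `v₁` and `vᵣ` as positive eigenvectors.
For positive eigenvectors `u`, `w` of a nonnegative matrix `B`, let `c` be the largest scalar with
`c • w ≤ u`, so that equality holds at some index `i`. Applying `B` to `u - c • w ≥ 0` and reading
off coordinate `i` shows that the eigenvalue of `w` is at most that of `u`; by symmetry the two
eigenvalues agree. Then `(B *ᵥ (u - c • w)) i = 0`, and as the row `B i` is strictly positive,
`u = c • w`.
-/

open Matrix

namespace Matrix

theorem pow_mulVec_of_mulVec_eq_smul {ι R : Type*} [Fintype ι] [DecidableEq ι] [CommSemiring R]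
    {A : Matrix ι ι R} {v : ι → R} {μ : R} (h : A *ᵥ v = μ • v) (k : ℕ) :
    A ^ k *ᵥ v = μ ^ k • v := by
  induction k with
  | zero => simp
  | succ k ih => rw [pow_succ, ← mulVec_mulVec, h, mulVec_smul, ih, smul_smul, ← pow_succ']

variable {ι 𝕜 : Type*} [Field 𝕜] [LinearOrder 𝕜] [IsStrictOrderedRing 𝕜]

/-- Take `c = u i / w i` for an index `i` minimising this ratio. -/
theorem exists_smul_le_of_pos [Finite ι] [Nonempty ι] (u : ι → 𝕜) {w : ι → 𝕜}
    (hw : ∀ i, 0 < w i) : ∃ c i, c • w ≤ u ∧ c * w i = u i := by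
  obtain ⟨i, hi⟩ := Finite.exists_min (fun j => u j / w j)
  refine ⟨u i / w i, i, fun j => ?_, div_mul_cancel₀ _ (hw i).ne'⟩
  simpa only [Pi.smul_apply, smul_eq_mul, ← le_div_iff₀ (hw j)] using hi j

variable [Fintype ι] {B : Matrix ι ι 𝕜} {u w : ι → 𝕜} {μ ν : 𝕜}

theorem eigenvalue_le_of_nonneg_of_pos [Nonempty ι] (hB : ∀ i j, 0 ≤ B i j)
    (hu : ∀ i, 0 < u i) (hw : ∀ i, 0 < w i) (hBu : B *ᵥ u = μ • u) (hBw : B *ᵥ w = ν • w) :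
    ν ≤ μ := by
  obtain ⟨c, i, hle, hi⟩ := exists_smul_le_of_pos u hw
  have : 0 ≤ (B *ᵥ (u - c • w)) i :=
    Finset.sum_nonneg fun j _ => mul_nonneg (hB i j) (sub_nonneg.2 (hle j))
  rw [mulVec_sub, mulVec_smul, hBu, hBw] at this
  simp only [Pi.sub_apply, Pi.smul_apply, smul_eq_mul] at this
  rw [mul_left_comm, hi, ← sub_mul] at this
  exact sub_nonneg.1 (nonneg_of_mul_nonneg_left this (hu i))

theorem eq_smul_of_pos_of_mulVec_eq_smul (hB : ∀ i j, 0 < B i j)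
    (hw : ∀ i, 0 < w i) (hBu : B *ᵥ u = μ • u) (hBw : B *ᵥ w = μ • w) : ∃ c : 𝕜, u = c • w := by
  cases isEmpty_or_nonempty ι
  · exact ⟨0, Subsingleton.elim _ _⟩
  obtain ⟨c, i, hle, hi⟩ := exists_smul_le_of_pos u hw
  have hzero : (B *ᵥ (u - c • w)) i = 0 := by
    rw [mulVec_sub, mulVec_smul, hBu, hBw]
    simp only [Pi.sub_apply, Pi.smul_apply, smul_eq_mul]
    rw [mul_left_comm, hi, sub_self]
  have hterms := (Finset.sum_eq_zero_iff_of_nonneg fun j _ =>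
    mul_nonneg (hB i j).le (sub_nonneg.2 (hle j))).1 hzero
  refine ⟨c, funext fun j => ?_⟩
  exact sub_eq_zero.1 <| (mul_eq_zero.1 (hterms j (Finset.mem_univ j))).resolve_left (hB i j).ne'

theorem exists_eq_smul_of_pos_of_mulVec_eq_smul (hB : ∀ i j, 0 < B i j) (hu : ∀ i, 0 < u i)
    (hw : ∀ i, 0 < w i) (hBu : B *ᵥ u = μ • u) (hBw : B *ᵥ w = ν • w) : ∃ c : 𝕜, u = c • w := by
  cases isEmpty_or_nonempty ι
  · exact ⟨0, Subsingleton.elim _ _⟩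
  have hB' : ∀ i j, 0 ≤ B i j := fun i j => (hB i j).le
  obtain rfl : μ = ν := le_antisymm (eigenvalue_le_of_nonneg_of_pos hB' hw hu hBw hBu)
    (eigenvalue_le_of_nonneg_of_pos hB' hu hw hBu hBw)
  exact eq_smul_of_pos_of_mulVec_eq_smul hB hw hBu hBw

end Matrix

theorem stmt10_general (n : ℕ) (A : Matrix (Fin n) (Fin n) ℝ)
    (hev : ∃ k₀ : ℕ, 1 ≤ k₀ ∧ ∀ k ≥ k₀, ∀ i j, 0 < (A ^ k) i j)
    (ρ : ℝ)
    (v₁ : Fin n → ℝ) (hv₁pos : ∀ i, 0 < v₁ i)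
    (μ₁ : ℝ) (hv₁ : A *ᵥ v₁ = μ₁ • v₁)
    (vᵣ : Fin n → ℝ) (hvᵣpos : ∀ i, 0 < vᵣ i)
    (hvᵣ : A *ᵥ vᵣ = ρ • vᵣ) :
    ∃ c : ℝ, v₁ = c • vᵣ := by
  obtain ⟨k₀, -, hpos⟩ := hev
  exact exists_eq_smul_of_pos_of_mulVec_eq_smul (hpos k₀ le_rfl) hv₁pos hvᵣpos
    (pow_mulVec_of_mulVec_eq_smul hv₁ k₀) (pow_mulVec_of_mulVec_eq_smul hvᵣ k₀)

theorem stmt10 (n : ℕ) (A : Matrix (Fin n) (Fin n) ℝ)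
    (hev : ∃ k₀ : ℕ, 1 ≤ k₀ ∧ ∀ k ≥ k₀, ∀ i j, 0 < (A ^ k) i j)
    (ρ : ℝ)
    (hρ : IsGreatest {r : ℝ | ∃ μ ∈ spectrum ℂ (A.map (algebraMap ℝ ℂ)),
      ‖μ‖ = r} ρ)
    (v₁ : Fin n → ℝ) (hv₁pos : ∀ i, 0 < v₁ i)
    (μ₁ : ℝ) (hv₁ : A *ᵥ v₁ = μ₁ • v₁)
    (vᵣ : Fin n → ℝ) (hvᵣpos : ∀ i, 0 < vᵣ i)
    (hvᵣ : A *ᵥ vᵣ = ρ • vᵣ) :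
    ∃ c : ℝ, v₁ = c • vᵣ :=
  stmt10_general n A hev ρ v₁ hv₁pos μ₁ hv₁ vᵣ hvᵣpos hvᵣ
end

section
/- Let E ∈ ℝ^{N×N} be symmetric negative semidefinite with a one-dimensional kernel spanned by a positive vector v_r. Let V(x) = Σᵢ [−2xᵢ − 2 ln(1 − xᵢ)] defined on the set S = { x ∈ ℝᴺ : −1 ≤ xᵢ ≤ 1 − ε } for some 0 < ε < 2. Then along any solution of ẋ = ½(I − diag(x)) E x staying in S, the derivative of V satisfies d/dt V(x(t)) = x(t)ᵀ E x(t) ≤ 0, with equality at time t if and only if x(t) is a scalar multiple of v_r. -/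
/-!
The factor `1 - xᵢ` in the dynamics cancels the derivative of `log (1 - xᵢ)`, so the `i`-th term
of `V` changes at rate `xᵢ (E x)ᵢ`. Since `-E` is positive semidefinite, its quadratic form
vanishes exactly on its kernel, which is spanned by `vᵣ`.
-/

open Matrix

theorem Matrix.dotProduct_mulVec_self_eq_zero_iff_of_nonpos {n : Type*} [Fintype n]
    {E : Matrix n n ℝ} (hsym : Eᵀ = E) (hnsd : ∀ y : n → ℝ, y ⬝ᵥ (E *ᵥ y) ≤ 0) (y : n → ℝ) :
    y ⬝ᵥ (E *ᵥ y) = 0 ↔ E *ᵥ y = 0 := by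
  have hpsd : (-E).PosSemidef := .of_dotProduct_mulVec_nonneg
    (by simp [IsHermitian, conjTranspose_eq_transpose_of_trivial, hsym])
    (fun z => by simpa [neg_mulVec] using hnsd z)
  simpa [neg_mulVec] using hpsd.dotProduct_mulVec_zero_iff y

theorem HasDerivAt.neg_two_mul_sub_two_mul_log_one_sub {u : ℝ → ℝ} {u' t : ℝ}
    (hu : HasDerivAt u u' t) (hne : u t ≠ 1) :
    HasDerivAt (fun s => -2 * u s - 2 * Real.log (1 - u s)) (2 * u t * u' / (1 - u t)) t := by
  have hne' : 1 - u t ≠ 0 := sub_ne_zero.mpr hne.symm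
  refine ((hu.const_mul (-2)).sub (((hu.const_sub 1).log hne').const_mul 2)).congr_deriv ?_
  field_simp
  ring

theorem stmt12_general (N : ℕ) (E : Matrix (Fin N) (Fin N) ℝ)
    (hsym : Eᵀ = E)
    (hnsd : ∀ y : Fin N → ℝ, y ⬝ᵥ (E *ᵥ y) ≤ 0)
    (vᵣ : Fin N → ℝ)
    (hker : ∀ y : Fin N → ℝ, E *ᵥ y = 0 ↔ ∃ α : ℝ, y = α • vᵣ)
    (ε : ℝ) (hε : 0 < ε ∧ ε < 2)
    (V : (Fin N → ℝ) → ℝ)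
    (hV : V = fun z => ∑ i, (-2 * z i - 2 * Real.log (1 - z i)))
    (x : ℝ → Fin N → ℝ)
    (hODE : ∀ t : ℝ, ∀ i, HasDerivAt (fun s => x s i)
      ((1/2) * (1 - x t i) * ((E *ᵥ x t) i)) t)
    (hS : ∀ t : ℝ, ∀ i, -1 ≤ x t i ∧ x t i ≤ 1 - ε) :
    ∀ t : ℝ,
      HasDerivAt (fun s => V (x s)) ((x t) ⬝ᵥ (E *ᵥ x t)) t ∧
      (x t) ⬝ᵥ (E *ᵥ x t) ≤ 0 ∧
      ((x t) ⬝ᵥ (E *ᵥ x t) = 0 ↔ ∃ α : ℝ, x t = α • vᵣ) := by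
  intro t
  have hne : ∀ i, x t i ≠ 1 := fun i => by linarith [(hS t i).2, hε.1]
  have hterm : ∀ i, HasDerivAt (fun s => -2 * x s i - 2 * Real.log (1 - x s i))
      (x t i * (E *ᵥ x t) i) t := fun i => by
    convert (hODE t i).neg_two_mul_sub_two_mul_log_one_sub (hne i) using 1
    field_simp [sub_ne_zero.mpr (hne i).symm]
  refine ⟨?_, hnsd (x t), ?_⟩
  · subst hV
    exact HasDerivAt.fun_sum fun i _ => hterm i
  · rw [dotProduct_mulVec_self_eq_zero_iff_of_nonpos hsym hnsd, hker]

theorem stmt12 (N : ℕ) (E : Matrix (Fin N) (Fin N) ℝ)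
    (hsym : Eᵀ = E)
    (hnsd : ∀ y : Fin N → ℝ, y ⬝ᵥ (E *ᵥ y) ≤ 0)
    (vᵣ : Fin N → ℝ) (hvᵣpos : ∀ i, 0 < vᵣ i)
    (hker : ∀ y : Fin N → ℝ, E *ᵥ y = 0 ↔ ∃ α : ℝ, y = α • vᵣ)
    (ε : ℝ) (hε : 0 < ε ∧ ε < 2)
    (V : (Fin N → ℝ) → ℝ)
    (hV : V = fun z => ∑ i, (-2 * z i - 2 * Real.log (1 - z i)))
    (x : ℝ → Fin N → ℝ)
    (hODE : ∀ t : ℝ, ∀ i, HasDerivAt (fun s => x s i)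
      ((1/2) * (1 - x t i) * ((E *ᵥ x t) i)) t)
    (hS : ∀ t : ℝ, ∀ i, -1 ≤ x t i ∧ x t i ≤ 1 - ε) :
    ∀ t : ℝ,
      HasDerivAt (fun s => V (x s)) ((x t) ⬝ᵥ (E *ᵥ x t)) t ∧
      (x t) ⬝ᵥ (E *ᵥ x t) ≤ 0 ∧
      ((x t) ⬝ᵥ (E *ᵥ x t) = 0 ↔ ∃ α : ℝ, x t = α • vᵣ) :=
  stmt12_general N E hsym hnsd vᵣ hker ε hε V hV x hODE hS
end

section
/- Let E ∈ ℝ^{N×N} and Γ a positive diagonal matrix with H(ΓE) negative semidefinite and rank H(ΓE) = rank E. Suppose that after a permutation P, with Ē = PEPᵀ, E is block partitioned as Ē = [[Ē₁₁, Ē₁₂],[Ē₂₁, Ē₂₂]]. If Ē₂₂ ξ = 0 for some ξ, then Ē₁₂ ξ = 0 as well, so (0, ξ)ᵀ lies in the kernel of Ē. -/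
open Matrix

theorem stmt15 (N m k : ℕ) (E : Matrix (Fin N) (Fin N) ℝ)
    (γ : Fin N → ℝ) (hγ : ∀ i, 0 < γ i)
    (Γ : Matrix (Fin N) (Fin N) ℝ) (hΓ : Γ = Matrix.diagonal γ)
    (hnsd : ∀ y : Fin N → ℝ,
      y ⬝ᵥ (((1/2 : ℝ) • (Γ * E + (Γ * E)ᵀ)) *ᵥ y) ≤ 0)
    (hrank : ((1/2 : ℝ) • (Γ * E + (Γ * E)ᵀ)).rank = E.rank)
    (e : Fin N ≃ Fin m ⊕ Fin k)
    (Ebar : Matrix (Fin m ⊕ Fin k) (Fin m ⊕ Fin k) ℝ)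
    (hEbar : Ebar = E.submatrix e.symm e.symm) :
    ∀ ξ : Fin k → ℝ, Ebar.toBlocks₂₂ *ᵥ ξ = 0 →
      Ebar.toBlocks₁₂ *ᵥ ξ = 0 ∧ Ebar *ᵥ (Sum.elim 0 ξ) = 0 := by
  intro ξ hξ
  set A : Matrix (Fin N) (Fin N) ℝ := (1/2 : ℝ) • (Γ * E + (Γ * E)ᵀ) with hA
  -- A is symmetric
  have hherm : A.IsHermitian := by
    show Aᴴ = A
    rw [Matrix.conjTranspose_eq_transpose_of_trivial, hA, Matrix.transpose_smul,
      Matrix.transpose_add, Matrix.transpose_transpose, add_comm]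
  -- -A is positive semidefinite
  have hpsd : (-A).PosSemidef := by
    refine Matrix.PosSemidef.of_dotProduct_mulVec_nonneg ?_ (fun x => ?_)
    · simpa [Matrix.IsHermitian] using congrArg Neg.neg hherm
    · have := hnsd x
      simp only [Matrix.neg_mulVec, dotProduct_neg, star_trivial]
      linarith
  -- quadratic form of A equals quadratic form of Γ*E
  have hquad : ∀ x : Fin N → ℝ, x ⬝ᵥ (A *ᵥ x) = x ⬝ᵥ ((Γ * E) *ᵥ x) := by
    intro x
    have h1 : x ⬝ᵥ ((Γ * E)ᵀ *ᵥ x) = x ⬝ᵥ ((Γ * E) *ᵥ x) := by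
      rw [Matrix.dotProduct_mulVec, Matrix.vecMul_transpose, dotProduct_comm]
    rw [hA, Matrix.smul_mulVec, Matrix.add_mulVec, dotProduct_smul,
      dotProduct_add, h1, smul_eq_mul]
    ring
  -- x ⬝ᵥ A x = 0 implies A x = 0
  have hAzero : ∀ x : Fin N → ℝ, x ⬝ᵥ (A *ᵥ x) = 0 → A *ᵥ x = 0 := by
    intro x hx
    have : (-A) *ᵥ x = 0 := by
      rw [← hpsd.dotProduct_mulVec_zero_iff x]
      simp only [Matrix.neg_mulVec, dotProduct_neg, star_trivial, hx, neg_zero]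
    have := congrArg Neg.neg this
    simpa [Matrix.neg_mulVec] using this
  -- ker E ≤ ker A
  have hkerle : LinearMap.ker E.mulVecLin ≤ LinearMap.ker A.mulVecLin := by
    intro x hx
    rw [LinearMap.mem_ker, Matrix.mulVecLin_apply] at hx ⊢
    apply hAzero
    rw [hquad, ← Matrix.mulVec_mulVec, hx, Matrix.mulVec_zero, dotProduct_zero]
  -- hence ker E = ker A by rank equality
  have hkereq : LinearMap.ker E.mulVecLin = LinearMap.ker A.mulVecLin := by
    apply Submodule.eq_of_le_of_finrank_le hkerle
    have hE := LinearMap.finrank_range_add_finrank_ker E.mulVecLin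
    have hA' := LinearMap.finrank_range_add_finrank_ker A.mulVecLin
    have : A.rank = E.rank := hrank
    rw [Matrix.rank] at this
    rw [Matrix.rank] at this
    omega
  -- set up the vectors
  set v : Fin m ⊕ Fin k → ℝ := Sum.elim 0 ξ with hv
  set x : Fin N → ℝ := v ∘ e with hx
  have hEbarv : Ebar *ᵥ v = (E *ᵥ x) ∘ e.symm := by
    rw [hEbar, Matrix.submatrix_mulVec_equiv]
    congr 1
  have hEbarv' : Ebar *ᵥ v = Sum.elim (Ebar.toBlocks₁₂ *ᵥ ξ) 0 := by
    conv_lhs => rw [← Matrix.fromBlocks_toBlocks Ebar]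
    rw [Matrix.fromBlocks_mulVec]
    have h1 : v ∘ Sum.inl = (0 : Fin m → ℝ) := rfl
    have h2 : v ∘ Sum.inr = ξ := rfl
    rw [h1, h2, hξ]
    simp
  -- quadratic form vanishes at x
  have hqx : x ⬝ᵥ ((Γ * E) *ᵥ x) = 0 := by
    rw [← Matrix.mulVec_mulVec, hΓ]
    have hdiag : Matrix.diagonal γ *ᵥ (E *ᵥ x) = fun i => γ i * (E *ᵥ x) i := by
      ext i; simp [Matrix.mulVec_diagonal]
    rw [hdiag]
    have hEx : ∀ i : Fin N, (E *ᵥ x) i = (Ebar *ᵥ v) (e i) := by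
      intro i
      rw [hEbarv]
      simp
    unfold dotProduct
    apply Finset.sum_eq_zero
    intro i _
    show x i * (γ i * (E *ᵥ x) i) = 0
    rw [hEx i]
    have hxv : x i = v (e i) := rfl
    rw [hxv, hEbarv']
    cases h : e i with
    | inl a => simp [hv, h]
    | inr b => simp [hv, h]
  -- conclude
  have hAx : A *ᵥ x = 0 := hAzero x (by rw [hquad]; exact hqx)
  have hxkerA : x ∈ LinearMap.ker A.mulVecLin := by
    rw [LinearMap.mem_ker, Matrix.mulVecLin_apply]; exact hAx
  have hxkerE : E *ᵥ x = 0 := by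
    have := hkereq ▸ hxkerA
    rwa [LinearMap.mem_ker, Matrix.mulVecLin_apply] at this
  have hEbarv0 : Ebar *ᵥ v = 0 := by
    rw [hEbarv, hxkerE]
    ext s; simp
  constructor
  · ext j
    have := congrFun (hEbarv'.symm.trans hEbarv0) (Sum.inl j)
    simpa using this
  · exact hEbarv0
end

section
/- Let A be a real n×n matrix that possesses the strong Perron–Frobenius property together with its transpose: ρ(A) is a simple positive eigenvalue of both A and Aᵀ, strictly dominant in modulus (|λ| < ρ(A) for all other eigenvalues λ), with positive right eigenvectors v and w respectively. Then (A/ρ(A))ᵏ converges as k → ∞ to the rank-one matrix v wᵀ/(wᵀ v), which is entrywise positive; consequently A is eventually positive. -/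
open Matrix Filter Topology
open scoped ENNReal NNReal

/-!
Put `B = ρ⁻¹ A` and `P = v wᵀ / (wᵀ v)`. Then `P` is an idempotent absorbed by `B` on both sides,
so `(B - P) ^ (k + 1) = B ^ (k + 1) - P`. An eigenvector `x` of `B - P` for an eigenvalue `μ ≠ 0`
lies in the kernel of `P` and is an eigenvector of `A` for `ρ μ`. Simplicity of `ρ` rules out
`ρ μ = ρ` (then `x` would be a multiple of `v`, which `P` fixes), and dominance gives `|ρ μ| < ρ`.
So the spectrum of `B - P` lies in the open unit disc, Gelfand's formula gives `(B - P) ^ k → 0`,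
and `B ^ k → P`. Since `P > 0` entrywise, so is `B ^ k`, hence `A ^ k = ρ ^ k B ^ k`, for large `k`.
-/

theorem sub_pow_succ_of_isIdempotentElem {R : Type*} [Ring R] {b p : R} (hbp : b * p = p)
    (hpb : p * b = p) (hp : IsIdempotentElem p) (k : ℕ) :
    (b - p) ^ (k + 1) = b ^ (k + 1) - p := by
  have hpbk : ∀ m : ℕ, p * b ^ m = p := fun m => by
    induction m with
    | zero => rw [pow_zero, mul_one]
    | succ m ih => rw [pow_succ, ← mul_assoc, ih, hpb]
  induction k with
  | zero => rw [zero_add, pow_one, pow_one]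
  | succ k ih =>
    rw [pow_succ', ih, sub_mul, mul_sub, mul_sub, ← pow_succ', hpbk, hbp, hp.eq]
    abel

theorem tendsto_pow_atTop_nhds_zero_of_spectralRadius_lt_one {A : Type*} [NormedRing A]
    [NormedAlgebra ℂ A] [CompleteSpace A] {a : A} (ha : spectralRadius ℂ a < 1) :
    Tendsto (a ^ ·) atTop (𝓝 0) := by
  obtain ⟨r, hr, hr1⟩ := ENNReal.lt_iff_exists_nnreal_btwn.mp ha
  have hev : ∀ᶠ k : ℕ in atTop, (‖a ^ k‖₊ : ℝ≥0∞) ^ (1 / (k : ℝ)) < r :=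
    (spectrum.pow_nnnorm_pow_one_div_tendsto_nhds_spectralRadius a).eventually_lt_const hr
  refine squeeze_zero_norm' ?_
    (tendsto_pow_atTop_nhds_zero_of_lt_one r.coe_nonneg (by exact_mod_cast hr1))
  filter_upwards [hev, eventually_gt_atTop 0] with k hk hk0
  rw [one_div, ENNReal.rpow_inv_lt_iff (by positivity), ENNReal.rpow_natCast] at hk
  exact_mod_cast hk.le

theorem Module.End.exists_smul_eq_of_rootMultiplicity_le_one {K V : Type*} [Field K]
    [AddCommGroup V] [Module K V] [FiniteDimensional K V] {f : Module.End K V} {μ : K}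
    (hμ : f.charpoly.rootMultiplicity μ ≤ 1) {v x : V} (hv : v ∈ f.eigenspace μ) (hv0 : v ≠ 0)
    (hx : x ∈ f.eigenspace μ) : ∃ c : K, c • v = x := by
  have hpos : 0 < Module.finrank K (f.eigenspace μ) :=
    Module.finrank_pos_iff_exists_ne_zero.mpr ⟨⟨v, hv⟩, by simpa using hv0⟩
  obtain ⟨c, hc⟩ := (finrank_eq_one_iff_of_nonzero' (⟨v, hv⟩ : f.eigenspace μ)
    (by simpa using hv0)).mp (le_antisymm ((f.finrank_eigenspace_le μ).trans hμ) hpos) ⟨x, hx⟩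
  exact ⟨c, congrArg Subtype.val hc⟩

namespace Matrix

theorem tendsto_of_tendsto_map_ofReal {α m n : Type*} {l : Filter α} {f : α → Matrix m n ℝ}
    {P : Matrix m n ℝ} (h : Tendsto (fun a => (f a).map ((↑) : ℝ → ℂ)) l (𝓝 (P.map (↑)))) :
    Tendsto f l (𝓝 P) := by
  simpa [Function.comp_def, map_map] using
    ((continuous_id.matrix_map Complex.continuous_re).tendsto _).comp h

variable {ι : Type*} [Fintype ι] [DecidableEq ι]

section
-- Any Banach-algebra norm will do: the ℓ∞-operator norm induces the product topology.
attribute [local instance] Matrix.linftyOpNormedRing Matrix.linftyOpNormedAlgebra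

theorem tendsto_pow_atTop_nhds_zero_of_forall_norm_lt_one {M : Matrix ι ι ℂ}
    (hM : ∀ μ ∈ spectrum ℂ M, ‖μ‖ < 1) : Tendsto (M ^ ·) atTop (𝓝 0) := by
  cases isEmpty_or_nonempty ι
  · exact tendsto_const_nhds.congr fun _ => Subsingleton.elim _ _
  have : CompleteSpace (Matrix ι ι ℂ) := FiniteDimensional.complete ℂ _
  refine tendsto_pow_atTop_nhds_zero_of_spectralRadius_lt_one ?_
  exact_mod_cast spectrum.spectralRadius_lt_of_forall_lt M (r := 1) fun μ hμ => by
    exact_mod_cast hM μ hμ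

end

theorem norm_lt_one_of_mem_spectrum_inv_smul_sub {K : Type*} [NormedField K]
    {M P : Matrix ι ι K} {ρ : K} (hρ : ρ ≠ 0) (hsimple : M.charpoly.rootMultiplicity ρ ≤ 1)
    (hdom : ∀ μ ∈ spectrum K M, μ ≠ ρ → ‖μ‖ < ‖ρ‖) (hP : IsIdempotentElem P)
    (hPM : P * M = ρ • P) {v : ι → K} (hv : v ≠ 0) (hMv : M *ᵥ v = ρ • v) (hPv : P *ᵥ v = v)
    {μ : K} (hμ : μ ∈ spectrum K (ρ⁻¹ • M - P)) : ‖μ‖ < 1 := by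
  rcases eq_or_ne μ 0 with rfl | hμ0
  · simp
  obtain ⟨x, hx, hx0⟩ : ∃ x, (ρ⁻¹ • M - P) *ᵥ x = μ • x ∧ x ≠ 0 := by
    rw [← spectrum_toLin', ← Module.End.hasEigenvalue_iff_mem_spectrum] at hμ
    obtain ⟨x, hx⟩ := hμ.exists_hasEigenvector
    exact ⟨x, Module.End.mem_eigenspace_iff.mp hx.1, hx.2⟩
  have hPx : P *ᵥ x = 0 := by
    have hPC : P * (ρ⁻¹ • M - P) = 0 := by
      rw [mul_sub, mul_smul_comm, hPM, smul_smul, inv_mul_cancel₀ hρ, one_smul, hP.eq, sub_self]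
    have h := congrArg (P *ᵥ ·) hx
    simp only [mulVec_mulVec, hPC, zero_mulVec, mulVec_smul] at h
    exact (smul_eq_zero.mp h.symm).resolve_left hμ0
  have hMx : M *ᵥ x = (ρ * μ) • x := by
    rw [sub_mulVec, hPx, sub_zero, smul_mulVec] at hx
    rw [mul_smul, ← hx, smul_smul, mul_inv_cancel₀ hρ, one_smul]
  have hρμ : ρ * μ ≠ ρ := by
    intro h
    rw [h] at hMx
    obtain ⟨c, rfl⟩ := Module.End.exists_smul_eq_of_rootMultiplicity_le_one
      (f := M.toLin') (by rwa [charpoly_toLin'])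
      (Module.End.mem_eigenspace_iff.mpr hMv) hv (Module.End.mem_eigenspace_iff.mpr hMx)
    rw [mulVec_smul, hPv] at hPx
    exact hx0 hPx
  have hmem : ρ * μ ∈ spectrum K M := by
    rw [← spectrum_toLin']
    exact (Module.End.hasEigenvalue_of_hasEigenvector
      ⟨Module.End.mem_eigenspace_iff.mpr hMx, hx0⟩).mem_spectrum
  have h := hdom _ hmem hρμ
  rw [norm_mul] at h
  exact lt_of_mul_lt_mul_left (by simpa using h) (norm_nonneg ρ)

theorem tendsto_pow_inv_smul_nhds_vecMulVec {M : Matrix ι ι ℂ} {ρ : ℂ} (hρ : ρ ≠ 0)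
    (hsimple : M.charpoly.rootMultiplicity ρ ≤ 1) (hdom : ∀ μ ∈ spectrum ℂ M, μ ≠ ρ → ‖μ‖ < ‖ρ‖)
    {v w : ι → ℂ} (hMv : M *ᵥ v = ρ • v) (hwM : w ᵥ* M = ρ • w) (hwv : w ⬝ᵥ v ≠ 0) :
    Tendsto (fun k => (ρ⁻¹ • M) ^ k) atTop (𝓝 ((w ⬝ᵥ v)⁻¹ • vecMulVec v w)) := by
  set P := (w ⬝ᵥ v)⁻¹ • vecMulVec v w with hP_def
  have hv : v ≠ 0 := by rintro rfl; simp at hwv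
  have hMP : M * P = ρ • P := by
    rw [hP_def, mul_smul_comm, mul_vecMulVec, hMv, smul_vecMulVec, smul_comm]
  have hPM : P * M = ρ • P := by
    rw [hP_def, smul_mul_assoc, vecMulVec_mul, hwM, vecMulVec_smul, smul_comm]
  have hP : IsIdempotentElem P := by
    rw [IsIdempotentElem, hP_def, smul_mul_smul_comm, vecMulVec_mul_vecMulVec, vecMulVec_smul,
      smul_smul, mul_assoc, inv_mul_cancel₀ hwv, mul_one]
  have hPv : P *ᵥ v = v := by
    rw [hP_def, smul_mulVec, vecMulVec_mulVec, op_smul_eq_smul, smul_smul, inv_mul_cancel₀ hwv,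
      one_smul]
  have hBP : ρ⁻¹ • M * P = P := by
    rw [smul_mul_assoc, hMP, smul_smul, inv_mul_cancel₀ hρ, one_smul]
  have hPB : P * (ρ⁻¹ • M) = P := by
    rw [mul_smul_comm, hPM, smul_smul, inv_mul_cancel₀ hρ, one_smul]
  have hlim := tendsto_pow_atTop_nhds_zero_of_forall_norm_lt_one fun μ hμ =>
    norm_lt_one_of_mem_spectrum_inv_smul_sub hρ hsimple hdom hP hPM hv hMv hPv hμ
  rw [← tendsto_add_atTop_iff_nat 1]
  simpa [sub_pow_succ_of_isIdempotentElem hBP hPB hP] using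
    ((tendsto_add_atTop_iff_nat 1).mpr hlim).add_const P

theorem eventually_pos_pow_of_tendsto {A P : Matrix ι ι ℝ} {ρ : ℝ} (hρ : 0 < ρ)
    (hlim : Tendsto (fun k => (ρ⁻¹ • A) ^ k) atTop (𝓝 P)) (hP : ∀ i j, 0 < P i j) :
    ∀ᶠ k in atTop, ∀ i j, 0 < (A ^ k) i j := by
  simp only [eventually_all]
  intro i j
  have hlim_ij : Tendsto (fun k => ((ρ⁻¹ • A) ^ k) i j) atTop (𝓝 (P i j)) :=
    tendsto_pi_nhds.mp (tendsto_pi_nhds.mp hlim i) j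
  filter_upwards [hlim_ij.eventually_const_lt (hP i j)] with k hk
  rw [smul_pow, smul_apply, smul_eq_mul] at hk
  exact pos_of_mul_pos_right hk (by positivity)

theorem tendsto_pow_inv_smul_nhds_vecMulVec_of_map {A : Matrix ι ι ℝ} {ρ : ℝ} (hρ : ρ ≠ 0)
    (hsimple : (A.map (algebraMap ℝ ℂ)).charpoly.rootMultiplicity (ρ : ℂ) ≤ 1)
    (hdom : ∀ μ ∈ spectrum ℂ (A.map (algebraMap ℝ ℂ)), μ ≠ (ρ : ℂ) → ‖μ‖ < |ρ|)
    {v w : ι → ℝ} (hAv : A *ᵥ v = ρ • v) (hwA : w ᵥ* A = ρ • w) (hwv : w ⬝ᵥ v ≠ 0) :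
    Tendsto (fun k => (ρ⁻¹ • A) ^ k) atTop (𝓝 ((w ⬝ᵥ v)⁻¹ • vecMulVec v w)) := by
  set φ := algebraMap ℝ ℂ
  have hAv' : A.map φ *ᵥ (φ ∘ v) = (ρ : ℂ) • (φ ∘ v) := by
    funext i; rw [← RingHom.map_mulVec, hAv]; simp [φ]
  have hwA' : (φ ∘ w) ᵥ* A.map φ = (ρ : ℂ) • (φ ∘ w) := by
    funext i; rw [← mulVec_transpose, ← transpose_map, ← RingHom.map_mulVec, mulVec_transpose, hwA]
    simp [φ]
  have hwv' : (φ ∘ w) ⬝ᵥ (φ ∘ v) ≠ 0 := by rwa [← RingHom.map_dotProduct, map_ne_zero]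
  have hlim := tendsto_pow_inv_smul_nhds_vecMulVec (Complex.ofReal_ne_zero.mpr hρ) hsimple
    (by simpa using hdom) hAv' hwA' hwv'
  refine tendsto_of_tendsto_map_ofReal ?_
  convert hlim using 2 with k
  · rw [← Complex.coe_algebraMap, Matrix.map_pow]; congr 1; ext i j; simp [φ]
  · ext i j; simp [φ, vecMulVec_apply, dotProduct]

end Matrix

theorem stmt19_general (n : ℕ) (A : Matrix (Fin n) (Fin n) ℝ)
    (ρ : ℝ) (hρpos : 0 < ρ)
    (Ac : Matrix (Fin n) (Fin n) ℂ) (hAc : Ac = A.map (algebraMap ℝ ℂ))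
    (hsimple : (Ac.charpoly).rootMultiplicity (ρ : ℂ) = 1)
    (hdom : ∀ μ ∈ spectrum ℂ Ac, μ ≠ (ρ : ℂ) → ‖μ‖ < ρ)
    (v w : Fin n → ℝ) (hv : ∀ i, 0 < v i) (hw : ∀ i, 0 < w i)
    (hAv : A *ᵥ v = ρ • v) (hAw : Aᵀ *ᵥ w = ρ • w) :
    Filter.Tendsto (fun k : ℕ => (ρ⁻¹ • A) ^ k) Filter.atTop
      (nhds ((w ⬝ᵥ v)⁻¹ • Matrix.vecMulVec v w)) ∧
    (∀ i j, 0 < ((w ⬝ᵥ v)⁻¹ • Matrix.vecMulVec v w) i j) ∧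
    (∃ k₀ : ℕ, ∀ k ≥ k₀, ∀ i j, 0 < (A ^ k) i j) := by
  rcases isEmpty_or_nonempty (Fin n) with hn | hn
  · exact ⟨tendsto_const_nhds.congr fun _ => Subsingleton.elim _ _, isEmptyElim, 0,
      fun _ _ => isEmptyElim⟩
  subst hAc
  have hwv : 0 < w ⬝ᵥ v :=
    Finset.sum_pos (fun i _ => mul_pos (hw i) (hv i)) Finset.univ_nonempty
  have hPpos : ∀ i j, 0 < ((w ⬝ᵥ v)⁻¹ • vecMulVec v w) i j := fun i j =>
    mul_pos (inv_pos.mpr hwv) (mul_pos (hv i) (hw j))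
  have hlim := tendsto_pow_inv_smul_nhds_vecMulVec_of_map hρpos.ne' hsimple.le
    (by simpa [abs_of_pos hρpos] using hdom) hAv (by rwa [← mulVec_transpose]) hwv.ne'
  exact ⟨hlim, hPpos, eventually_atTop.mp (eventually_pos_pow_of_tendsto hρpos hlim hPpos)⟩

theorem stmt19 (n : ℕ) (A : Matrix (Fin n) (Fin n) ℝ)
    (ρ : ℝ) (hρpos : 0 < ρ)
    (Ac : Matrix (Fin n) (Fin n) ℂ) (hAc : Ac = A.map (algebraMap ℝ ℂ))
    (hspec : (ρ : ℂ) ∈ spectrum ℂ Ac)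
    (hsimple : (Ac.charpoly).rootMultiplicity (ρ : ℂ) = 1)
    (hdom : ∀ μ ∈ spectrum ℂ Ac, μ ≠ (ρ : ℂ) → ‖μ‖ < ρ)
    (v w : Fin n → ℝ) (hv : ∀ i, 0 < v i) (hw : ∀ i, 0 < w i)
    (hAv : A *ᵥ v = ρ • v) (hAw : Aᵀ *ᵥ w = ρ • w) :
    Filter.Tendsto (fun k : ℕ => (ρ⁻¹ • A) ^ k) Filter.atTop
      (nhds ((w ⬝ᵥ v)⁻¹ • Matrix.vecMulVec v w)) ∧
    (∀ i j, 0 < ((w ⬝ᵥ v)⁻¹ • Matrix.vecMulVec v w) i j) ∧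
    (∃ k₀ : ℕ, ∀ k ≥ k₀, ∀ i j, 0 < (A ^ k) i j) :=
  stmt19_general n A ρ hρpos Ac hAc hsimple hdom v w hv hw hAv hAw
end
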